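/- arXiv:2012.08363 — 3 statements merged into one kernel-verified Lean document; each statement's English description precedes it below -/
import Mathlib

section
/- Let k ∈ V be a nonzero null vector (g(k,k) = 0) and let (n, m, m̄) be a Newman–Penrose tetrad adapted to k. Then the kernel of the linear operator D[k], acting on the space of complex symmetric bilinear forms on W, is exactly the ℂ-linear span of the six forms k⊙k, k⊙n, k⊙m, k⊙m̄, m⊙m, m̄⊙m̄; in particular, this kernel has complex dimension 6. -/
/-!
In dimension 4 the tetrad `k, n, m, m̄` is a basis of `W`, dual to the functionals
`-g(n, ·), -g(k, ·), g(m̄, ·), g(m, ·)`; in particular `g` is nondegenerate on `W` and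
`tr_g S = -2 S(k,n) + 2 S(m,m̄)` for symmetric `S`. As `k` is null, the only tetrad components
of `D[k] S` that can be nonzero are `D(n,n) = S(m,m̄)`, `D(n,m) = S(k,m)/2`,
`D(n,m̄) = S(k,m̄)/2` and `D(m,m̄) = S(k,k)/2`, so the kernel consists of the symmetric `S` with
`S(k,k) = S(k,m) = S(k,m̄) = S(m,m̄) = 0`. Such an `S` is determined by its six remaining
components `S(n,n), S(k,n), S(n,m̄), S(n,m), S(m̄,m̄), S(m,m)`, and each of them is seen by
exactly one of `k⊙k, k⊙n, k⊙m, k⊙m̄, m⊙m, m̄⊙m̄`.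
-/

open scoped TensorProduct
open Module

noncomputable section

variable {V : Type} [AddCommGroup V] [Module ℝ V]

/-- The complexification `W = ℂ ⊗ V` of the real vector space `V`. -/
abbrev Cx (V : Type) [AddCommGroup V] [Module ℝ V] := ℂ ⊗[ℝ] V

/-- The canonical inclusion of `V` into its complexification `W = ℂ ⊗ V`. -/
def ι (v : V) : Cx V := (1 : ℂ) ⊗ₜ[ℝ] v

/-- Complex conjugation `u ↦ ū` on `W = ℂ ⊗ V` induced by the real structure. -/
def conjW : Cx V →ₗ[ℝ] Cx V :=
  TensorProduct.map Complex.conjAe.toLinearMap LinearMap.id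

lemma conjW_smul (c : ℂ) (u : Cx V) :
    conjW (c • u) = (starRingEnd ℂ c) • conjW u := by
  induction u using TensorProduct.induction_on with
  | zero => simp
  | tmul x v =>
      simp [conjW, TensorProduct.smul_tmul', smul_eq_mul, map_mul, TensorProduct.map_tmul]
  | add a b ha hb => simp [smul_add, map_add, ha, hb]

/-- The ℂ-bilinear extension of `g` to `W = ℂ ⊗ V`. -/
def gW (g : LinearMap.BilinForm ℝ V) : LinearMap.BilinForm ℂ (Cx V) :=
  g.baseChange ℂ

/-- The symmetric product `u ⊙ v`, as a complex bilinear form on `W`: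
`(u ⊙ v)(a,b) = (1/2) (g(u,a) g(v,b) + g(v,a) g(u,b))`. -/
def sprod (g : LinearMap.BilinForm ℝ V) (u v : Cx V) : LinearMap.BilinForm ℂ (Cx V) :=
  LinearMap.mk₂ ℂ
    (fun a b => (1 / 2 : ℂ) * (gW g u a * gW g v b + gW g v a * gW g u b))
    (by intro a a' b; simp only [map_add]; ring)
    (by intro c a b; simp only [map_smul, smul_eq_mul]; ring)
    (by intro a b b'; simp only [map_add]; ring)
    (by intro a c b; simp only [map_smul, smul_eq_mul]; ring)

/-- The symmetric product with a fixed vector, as a linear map `b ↦ u ⊙ b`. -/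
def sprodL (g : LinearMap.BilinForm ℝ V) (u : Cx V) :
    Cx V →ₗ[ℂ] LinearMap.BilinForm ℂ (Cx V) where
  toFun v := sprod g u v
  map_add' v v' := by
    refine LinearMap.ext fun a => LinearMap.ext fun b => ?_
    simp only [sprod, LinearMap.mk₂_apply, LinearMap.add_apply, map_add]
    ring
  map_smul' c v := by
    refine LinearMap.ext fun a => LinearMap.ext fun b => ?_
    simp only [sprod, LinearMap.mk₂_apply, LinearMap.smul_apply, map_smul, smul_eq_mul,
      RingHom.id_apply]
    ring

/-- The conjugate form `ā` of a complex bilinear form `a` on `W`: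
`ā(u,v) = conj (a(ū, v̄))`. -/
def conjForm (a : LinearMap.BilinForm ℂ (Cx V)) : LinearMap.BilinForm ℂ (Cx V) :=
  LinearMap.mk₂ ℂ (fun u v => starRingEnd ℂ (a (conjW u) (conjW v)))
    (by intro u u' v; simp only [map_add, LinearMap.add_apply])
    (by intro c u v; simp only [conjW_smul, map_smul, LinearMap.smul_apply, smul_eq_mul,
          map_mul, Complex.conj_conj])
    (by intro u v v'; simp only [map_add])
    (by intro u c v; simp only [conjW_smul, map_smul, LinearMap.smul_apply, smul_eq_mul,
          map_mul, Complex.conj_conj])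

/-- A Newman–Penrose tetrad `(k, n, m, m̄)` adapted to a nonzero null `k ∈ V`:
all the orthogonality relations of the tetrad. -/
def IsNPTetrad (g : LinearMap.BilinForm ℝ V) (k n : V) (m : Cx V) : Prop :=
  gW g m (conjW m) = 1 ∧ gW g (ι k) (ι n) = -1 ∧
    gW g (ι k) (ι k) = 0 ∧ gW g (ι n) (ι n) = 0 ∧
    gW g m m = 0 ∧ gW g (conjW m) (conjW m) = 0 ∧
    gW g (ι k) m = 0 ∧ gW g (ι k) (conjW m) = 0 ∧
    gW g (ι n) m = 0 ∧ gW g (ι n) (conjW m) = 0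

variable [FiniteDimensional ℝ V]

/-- The `g`-associated endomorphism `Ŝ` of a bilinear form `S` on `W`, characterized by
`g(Ŝ a, b) = S(a, b)` (defined when the extension of `g` to `W` is nondegenerate, which
holds whenever `g` is nondegenerate). -/
def hatEnd (g : LinearMap.BilinForm ℝ V) (S : LinearMap.BilinForm ℂ (Cx V)) :
    Cx V →ₗ[ℂ] Cx V :=
  letI := Classical.dec ((gW g).Nondegenerate)
  if hnd : (gW g).Nondegenerate then ((gW g).toDual hnd).symm.toLinearMap ∘ₗ S else 0

/-- The metric trace `tr_g S` of a bilinear form `S` on `W`. -/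
def trg (g : LinearMap.BilinForm ℝ V) (S : LinearMap.BilinForm ℂ (Cx V)) : ℂ :=
  LinearMap.trace ℂ (Cx V) (hatEnd g S)

/-- The full metric contraction `⟨A, B⟩ = tr (Â ∘ B̂)` of bilinear forms on `W`. -/
def contr (g : LinearMap.BilinForm ℝ V) (A B : LinearMap.BilinForm ℂ (Cx V)) : ℂ :=
  LinearMap.trace ℂ (Cx V) (hatEnd g A ∘ₗ hatEnd g B)

/-- The value `D[k](S)(u,v)` of the symbol operator `D[k]` on a bilinear form `S`. -/
def Dval (g : LinearMap.BilinForm ℝ V) (k : V) (S : LinearMap.BilinForm ℂ (Cx V))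
    (u v : Cx V) : ℂ :=
  (1 / 2 : ℂ) *
    (gW g (ι k) (ι k) * S u v - gW g (ι k) (ι k) * gW g u v * trg g S
      + gW g (ι k) u * gW g (ι k) v * trg g S + gW g u v * S (ι k) (ι k)
      - gW g (ι k) u * S (ι k) v - gW g (ι k) v * S (ι k) u)

/-- The symbol operator `D[k]`, acting on bilinear forms on `W`. -/
def Dop (g : LinearMap.BilinForm ℝ V) (k : V) (S : LinearMap.BilinForm ℂ (Cx V)) :
    LinearMap.BilinForm ℂ (Cx V) :=
  LinearMap.mk₂ ℂ (fun u v => Dval g k S u v)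
    (by intro u u' v; simp only [Dval, map_add, LinearMap.add_apply]; ring)
    (by intro c u v; simp only [Dval, map_smul, LinearMap.smul_apply, smul_eq_mul]; ring)
    (by intro u v v'; simp only [Dval, map_add, LinearMap.add_apply]; ring)
    (by intro u c v; simp only [Dval, map_smul, LinearMap.smul_apply, smul_eq_mul]; ring)

omit [FiniteDimensional ℝ V] in
lemma gW_isSymm {g : LinearMap.BilinForm ℝ V} (hsymm : g.IsSymm) : (gW g).IsSymm :=
  LinearMap.BilinForm.isSymm_iff.mpr <|
    LinearMap.BilinForm.IsSymm.baseChange ℂ (LinearMap.BilinForm.isSymm_iff.mp hsymm)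

omit [FiniteDimensional ℝ V] in
lemma gW_comm {g : LinearMap.BilinForm ℝ V} (hsymm : g.IsSymm) (x y : Cx V) :
    gW g x y = gW g y x :=
  (gW_isSymm hsymm).eq x y

lemma gW_hatEnd {g : LinearMap.BilinForm ℝ V} (hnd : (gW g).Nondegenerate)
    (S : LinearMap.BilinForm ℂ (Cx V)) (a b : Cx V) :
    gW g (hatEnd g S a) b = S a b := by
  rw [hatEnd, dif_pos hnd, LinearMap.comp_apply]
  exact LinearMap.BilinForm.apply_toDual_symm_apply (S a) b

omit [FiniteDimensional ℝ V] in
lemma sprod_isSymm (g : LinearMap.BilinForm ℝ V) (u v : Cx V) : (sprod g u v).IsSymm :=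
  ⟨fun a b => by simp only [sprod, LinearMap.mk₂_apply]; ring⟩

def npTetrad (k n : V) (m : Cx V) : Fin 4 → Cx V := ![ι k, ι n, m, conjW m]

def npDual (g : LinearMap.BilinForm ℝ V) (k n : V) (m : Cx V) : Fin 4 → Cx V →ₗ[ℂ] ℂ :=
  ![-gW g (ι n), -gW g (ι k), gW g (conjW m), gW g m]

def npForms (g : LinearMap.BilinForm ℝ V) (k n : V) (m : Cx V) :
    Fin 6 → LinearMap.BilinForm ℂ (Cx V) :=
  ![sprod g (ι k) (ι k), sprod g (ι k) (ι n), sprod g (ι k) m, sprod g (ι k) (conjW m),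
    sprod g m m, sprod g (conjW m) (conjW m)]

omit [FiniteDimensional ℝ V] in
lemma range_npForms (g : LinearMap.BilinForm ℝ V) (k n : V) (m : Cx V) :
    Set.range (npForms g k n m) = {sprod g (ι k) (ι k), sprod g (ι k) (ι n), sprod g (ι k) m,
      sprod g (ι k) (conjW m), sprod g m m, sprod g (conjW m) (conjW m)} := by
  simp only [npForms, Matrix.range_cons, Matrix.range_empty, Set.union_empty, Set.singleton_union]

def npCoeffs (k n : V) (m : Cx V) : LinearMap.BilinForm ℂ (Cx V) →ₗ[ℂ] Fin 6 → ℂ where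
  toFun S := ![S (ι n) (ι n), 2 * S (ι k) (ι n), -2 * S (ι n) (conjW m), -2 * S (ι n) m,
    S (conjW m) (conjW m), S m m]
  map_add' S T := by
    ext i
    fin_cases i <;> simp <;> ring
  map_smul' c S := by
    ext i
    fin_cases i <;> simp <;> ring

def symbolKernel (k : V) (m : Cx V) : Submodule ℂ (LinearMap.BilinForm ℂ (Cx V)) where
  carrier := {S | S.IsSymm ∧ S (ι k) (ι k) = 0 ∧ S (ι k) m = 0 ∧ S (ι k) (conjW m) = 0 ∧
    S m (conjW m) = 0}
  add_mem' := by
    rintro S T ⟨hS, hS₁, hS₂, hS₃, hS₄⟩ ⟨hT, hT₁, hT₂, hT₃, hT₄⟩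
    exact ⟨hS.add hT, by simp [*]⟩
  zero_mem' := by simp
  smul_mem' := by
    rintro c S ⟨hS, h₁, h₂, h₃, h₄⟩
    exact ⟨hS.smul c, by simp [*]⟩

namespace IsNPTetrad

variable {g : LinearMap.BilinForm ℝ V} {k n : V} {m : Cx V}

omit [FiniteDimensional ℝ V] in
lemma symm (hsymm : g.IsSymm) (ht : IsNPTetrad g k n m) :
    gW g (conjW m) m = 1 ∧ gW g (ι n) (ι k) = -1 ∧ gW g m (ι k) = 0 ∧
      gW g (conjW m) (ι k) = 0 ∧ gW g m (ι n) = 0 ∧ gW g (conjW m) (ι n) = 0 := by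
  obtain ⟨h₁, h₂, -, -, -, -, h₇, h₈, h₉, h₁₀⟩ := ht
  exact ⟨(gW_comm hsymm _ _).trans h₁, (gW_comm hsymm _ _).trans h₂,
    (gW_comm hsymm _ _).trans h₇, (gW_comm hsymm _ _).trans h₈,
    (gW_comm hsymm _ _).trans h₉, (gW_comm hsymm _ _).trans h₁₀⟩

omit [FiniteDimensional ℝ V] in
lemma npDual_npTetrad (hsymm : g.IsSymm) (ht : IsNPTetrad g k n m) (i j : Fin 4) :
    npDual g k n m i (npTetrad k n m j) = if i = j then 1 else 0 := by
  obtain ⟨s₁, s₂, s₇, s₈, s₉, s₁₀⟩ := ht.symm hsymm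
  obtain ⟨h₁, h₂, h₃, h₄, h₅, h₆, h₇, h₈, h₉, h₁₀⟩ := ht
  fin_cases i <;> fin_cases j <;> simp [npDual, npTetrad, *]

omit [FiniteDimensional ℝ V] in
lemma linearIndependent (hsymm : g.IsSymm) (ht : IsNPTetrad g k n m) :
    LinearIndependent ℂ (npTetrad k n m) := by
  refine LinearIndependent.of_comp (LinearMap.pi (npDual g k n m)) ?_
  have hdual : LinearMap.pi (npDual g k n m) ∘ npTetrad k n m = Pi.basisFun ℂ (Fin 4) := by
    ext j i
    simp [ht.npDual_npTetrad hsymm, Pi.single_apply]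
  rw [hdual]
  exact (Pi.basisFun ℂ (Fin 4)).linearIndependent

def basis (hsymm : g.IsSymm) (ht : IsNPTetrad g k n m) (hdim : finrank ℝ V = 4) :
    Basis (Fin 4) ℂ (Cx V) :=
  basisOfLinearIndependentOfCardEqFinrank (ht.linearIndependent hsymm)
    (by rw [Module.finrank_baseChange, hdim, Fintype.card_fin])

@[simp]
lemma coe_basis (hsymm : g.IsSymm) (ht : IsNPTetrad g k n m) (hdim : finrank ℝ V = 4) :
    ⇑(ht.basis hsymm hdim) = npTetrad k n m :=
  coe_basisOfLinearIndependentOfCardEqFinrank _ _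

lemma basis_repr (hsymm : g.IsSymm) (ht : IsNPTetrad g k n m) (hdim : finrank ℝ V = 4)
    (x : Cx V) (i : Fin 4) : (ht.basis hsymm hdim).repr x i = npDual g k n m i x := by
  rw [← Basis.coord_apply]
  congr 1
  refine (ht.basis hsymm hdim).ext fun j => ?_
  rw [Basis.coord_apply, Basis.repr_self, Finsupp.single_apply, coe_basis,
    ht.npDual_npTetrad hsymm]
  exact if_congr eq_comm rfl rfl

lemma nondegenerate (hsymm : g.IsSymm) (ht : IsNPTetrad g k n m) (hdim : finrank ℝ V = 4) :
    (gW g).Nondegenerate := by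
  refine (gW_isSymm hsymm).isRefl.nondegenerate_iff_separatingRight.mpr
    fun x (hx : ∀ y, gW g y x = 0) => (ht.basis hsymm hdim).ext_elem fun i => ?_
  fin_cases i <;> simp [basis_repr, npDual, hx]

lemma trg_eq (hsymm : g.IsSymm) (ht : IsNPTetrad g k n m) (hdim : finrank ℝ V = 4)
    (S : LinearMap.BilinForm ℂ (Cx V)) :
    trg g S = -S (ι k) (ι n) - S (ι n) (ι k) + S m (conjW m) + S (conjW m) m := by
  have hnd := ht.nondegenerate hsymm hdim
  rw [trg, LinearMap.trace_eq_matrix_trace ℂ (ht.basis hsymm hdim), Matrix.trace,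
    Fin.sum_univ_four]
  simp [LinearMap.toMatrix_apply, basis_repr, npDual, npTetrad, gW_comm hsymm _ (hatEnd g S _),
    gW_hatEnd hnd]
  ring

lemma bilinForm_ext (hsymm : g.IsSymm) (ht : IsNPTetrad g k n m) (hdim : finrank ℝ V = 4)
    {S T : LinearMap.BilinForm ℂ (Cx V)}
    (h : ∀ a ∈ ({ι k, ι n, m, conjW m} : Set (Cx V)),
      ∀ b ∈ ({ι k, ι n, m, conjW m} : Set (Cx V)), S a b = T a b) :
    S = T := by
  have hmem (i : Fin 4) : npTetrad k n m i ∈ ({ι k, ι n, m, conjW m} : Set (Cx V)) := by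
    fin_cases i <;> simp [npTetrad]
  refine LinearMap.BilinForm.ext_basis (ht.basis hsymm hdim) fun i j => ?_
  rw [coe_basis]
  exact h _ (hmem i) _ (hmem j)

lemma Dval_eq_zero_iff (hsymm : g.IsSymm) (ht : IsNPTetrad g k n m) (hdim : finrank ℝ V = 4)
    {S : LinearMap.BilinForm ℂ (Cx V)} (hS : S.IsSymm) :
    (∀ u v, Dval g k S u v = 0) ↔
      S (ι k) (ι k) = 0 ∧ S (ι k) m = 0 ∧ S (ι k) (conjW m) = 0 ∧ S m (conjW m) = 0 := by
  have htr : trg g S = 2 * S m (conjW m) - 2 * S (ι k) (ι n) := by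
    rw [ht.trg_eq hsymm hdim, hS.eq (ι n), hS.eq (conjW m)]
    ring
  have ⟨h₁, h₂, h₃, h₄, _, _, h₇, h₈, h₉, h₁₀⟩ := ht
  constructor
  · intro hD
    have d₁ := hD m (conjW m)
    have d₂ := hD (ι n) m
    have d₃ := hD (ι n) (conjW m)
    have d₄ := hD (ι n) (ι n)
    simp only [Dval, htr, h₁, h₂, h₃, h₄, h₇, h₈, h₉, h₁₀] at d₁ d₂ d₃ d₄
    refine ⟨?_, ?_, ?_, ?_⟩
    · linear_combination 2 * d₁
    · linear_combination 2 * d₂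
    · linear_combination 2 * d₃
    · linear_combination d₄
  · rintro ⟨p₁, p₂, p₃, p₄⟩ u v
    have hD : Dop g k S = 0 := by
      refine ht.bilinForm_ext hsymm hdim ?_
      simp only [Set.mem_insert_iff, Set.mem_singleton_iff, forall_eq_or_imp, forall_eq]
      simp [Dop, Dval, htr, p₁, p₂, p₃, p₄, h₂, h₃, h₇, h₈]
      ring
    exact LinearMap.congr_fun₂ hD u v

omit [FiniteDimensional ℝ V] in
lemma npCoeffs_npForms (hsymm : g.IsSymm) (ht : IsNPTetrad g k n m) (i j : Fin 6) :
    npCoeffs k n m (npForms g k n m i) j = if i = j then 1 else 0 := by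
  obtain ⟨s₁, s₂, s₇, s₈, s₉, s₁₀⟩ := ht.symm hsymm
  obtain ⟨h₁, h₂, h₃, h₄, h₅, h₆, h₇, h₈, h₉, h₁₀⟩ := ht
  fin_cases i <;> fin_cases j <;> simp [npCoeffs, npForms, sprod, *] <;> ring

omit [FiniteDimensional ℝ V] in
lemma linearIndependent_npForms (hsymm : g.IsSymm) (ht : IsNPTetrad g k n m) :
    LinearIndependent ℂ (npForms g k n m) := by
  refine LinearIndependent.of_comp (npCoeffs k n m) ?_
  have hdual : npCoeffs k n m ∘ npForms g k n m = Pi.basisFun ℂ (Fin 6) := by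
    ext i j
    simp [ht.npCoeffs_npForms hsymm, Pi.single_apply, eq_comm]
  rw [hdual]
  exact (Pi.basisFun ℂ (Fin 6)).linearIndependent

omit [FiniteDimensional ℝ V] in
lemma npForms_mem_symbolKernel (hsymm : g.IsSymm) (ht : IsNPTetrad g k n m) (i : Fin 6) :
    npForms g k n m i ∈ symbolKernel k m := by
  obtain ⟨s₁, s₂, s₇, s₈, s₉, s₁₀⟩ := ht.symm hsymm
  obtain ⟨h₁, h₂, h₃, h₄, h₅, h₆, h₇, h₈, h₉, h₁₀⟩ := ht
  fin_cases i <;> exact ⟨sprod_isSymm .., by simp [npForms, sprod, *]⟩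

lemma sum_npCoeffs_smul_npForms (hsymm : g.IsSymm) (ht : IsNPTetrad g k n m)
    (hdim : finrank ℝ V = 4) {S : LinearMap.BilinForm ℂ (Cx V)} (hS : S ∈ symbolKernel k m) :
    ∑ i, npCoeffs k n m S i • npForms g k n m i = S := by
  obtain ⟨hS, p₁, p₂, p₃, p₄⟩ := hS
  obtain ⟨s₁, s₂, s₇, s₈, s₉, s₁₀⟩ := ht.symm hsymm
  have ⟨h₁, h₂, h₃, h₄, h₅, h₆, h₇, h₈, h₉, h₁₀⟩ := ht
  refine ht.bilinForm_ext hsymm hdim ?_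
  simp only [Set.mem_insert_iff, Set.mem_singleton_iff, forall_eq_or_imp, forall_eq]
  simp [Fin.sum_univ_six, npCoeffs, npForms, sprod, *, hS.eq _ (ι k), hS.eq (conjW m) m,
    hS.eq m (ι n), hS.eq (conjW m) (ι n), mul_right_comm _ _ (2⁻¹ : ℂ), one_add_one_eq_two]

end IsNPTetrad

theorem statement_0_general (g : LinearMap.BilinForm ℝ V) (hdim : finrank ℝ V = 4)
    (hsymm : g.IsSymm)
    (k n : V) (m : Cx V)
    (htetrad : IsNPTetrad g k n m) :
    {S : LinearMap.BilinForm ℂ (Cx V) | S.IsSymm ∧ ∀ u v, Dval g k S u v = 0}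
        = ↑(Submodule.span ℂ
            ({sprod g (ι k) (ι k), sprod g (ι k) (ι n), sprod g (ι k) m,
            sprod g (ι k) (conjW m), sprod g m m, sprod g (conjW m) (conjW m)} : Set (LinearMap.BilinForm ℂ (Cx V)))) ∧
      finrank ℂ ↥(Submodule.span ℂ
            ({sprod g (ι k) (ι k), sprod g (ι k) (ι n), sprod g (ι k) m,
            sprod g (ι k) (conjW m), sprod g m m, sprod g (conjW m) (conjW m)} : Set (LinearMap.BilinForm ℂ (Cx V)))) = 6 := by
  have hspan : Submodule.span ℂ (Set.range (npForms g k n m)) = symbolKernel k m :=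
    le_antisymm
      (Submodule.span_le.mpr (Set.range_subset_iff.mpr (htetrad.npForms_mem_symbolKernel hsymm)))
      fun S hS => (Submodule.mem_span_range_iff_exists_fun ℂ).mpr
        ⟨_, htetrad.sum_npCoeffs_smul_npForms hsymm hdim hS⟩
  rw [← range_npForms]
  refine ⟨?_, ?_⟩
  · rw [hspan]
    ext S
    exact and_congr_right (htetrad.Dval_eq_zero_iff hsymm hdim)
  · rw [finrank_span_eq_card (htetrad.linearIndependent_npForms hsymm), Fintype.card_fin]

/-- The kernel of the symbol operator `D[k]`, acting on complex symmetric bilinear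
forms on `W`, is exactly the ℂ-linear span of the six forms
`k⊙k, k⊙n, k⊙m, k⊙m̄, m⊙m, m̄⊙m̄`; in particular it has complex dimension 6. -/
theorem statement_0 (g : LinearMap.BilinForm ℝ V) (hdim : finrank ℝ V = 4)
    (hg : g.Nondegenerate) (hsymm : g.IsSymm)
    (k n : V) (m : Cx V) (hk : k ≠ 0) (hknull : g k k = 0)
    (htetrad : IsNPTetrad g k n m) :
    {S : LinearMap.BilinForm ℂ (Cx V) | S.IsSymm ∧ ∀ u v, Dval g k S u v = 0}
        = ↑(Submodule.span ℂ
            ({sprod g (ι k) (ι k), sprod g (ι k) (ι n), sprod g (ι k) m,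
            sprod g (ι k) (conjW m), sprod g m m, sprod g (conjW m) (conjW m)} : Set (LinearMap.BilinForm ℂ (Cx V)))) ∧
      finrank ℂ ↥(Submodule.span ℂ
            ({sprod g (ι k) (ι k), sprod g (ι k) (ι n), sprod g (ι k) m,
            sprod g (ι k) (conjW m), sprod g m m, sprod g (conjW m) (conjW m)} : Set (LinearMap.BilinForm ℂ (Cx V)))) = 6 :=
  statement_0_general g hdim hsymm k n m htetrad
end
end

section
/- Let k ∈ V and let S be a nonzero complex symmetric bilinear form on W satisfying the Lorenz gauge condition S(k, v) = (1/2) g(k,v) · tr_g S for all v ∈ W, and suppose D[k](S) = 0. Then k is null: g(k,k) = 0. (In particular, in dimension 4 the equation S = (1/2) g · tr_g S forces S = 0, so the only nontrivial solutions of D[k](S) = 0 in the Lorenz gauge have null k.) -/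
open scoped TensorProduct
open Module

noncomputable section

variable {V : Type} [AddCommGroup V] [Module ℝ V]

variable [FiniteDimensional ℝ V]

/-
Substituting the Lorenz gauge into `D[k](S)`, the terms `g(k,u) g(k,v) tr_g S` cancel and
`D[k](S) = ½ g(k,k) (S - ½ g tr_g S)`. So if `g(k,k) ≠ 0`, then `S = ½ g tr_g S`; since
`tr_g g = dim V`, taking traces gives `(1 - dim V / 2) tr_g S = 0`, hence `tr_g S = 0` and `S = 0`
as soon as `dim V ≠ 2`.
-/

lemma gW_ι_ι (g : LinearMap.BilinForm ℝ V) (u v : V) :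
    gW g (ι u) (ι v) = (g u v : ℂ) := by
  simp [gW, ι, LinearMap.BilinForm.baseChange_tmul, Complex.real_smul]

lemma gW_nondegenerate {g : LinearMap.BilinForm ℝ V} (hg : g.Nondegenerate) :
    (gW g).Nondegenerate := by
  let b := Module.finBasis ℝ V
  rw [LinearMap.BilinForm.nondegenerate_iff_det_ne_zero (b.baseChange ℂ)]
  have hmat : LinearMap.BilinForm.toMatrix (b.baseChange ℂ) (gW g) =
      (LinearMap.BilinForm.toMatrix b g).map (algebraMap ℝ ℂ) := by
    ext i j
    simp [LinearMap.BilinForm.toMatrix_apply, Basis.baseChange_apply, gW,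
      LinearMap.BilinForm.baseChange_tmul, Complex.real_smul, Matrix.map_apply]
  rw [hmat, ← RingHom.mapMatrix_apply, ← RingHom.map_det]
  simpa using (LinearMap.BilinForm.nondegenerate_iff_det_ne_zero b).mp hg

lemma hatEnd_gW {g : LinearMap.BilinForm ℝ V} (hg : g.Nondegenerate) :
    hatEnd g (gW g) = LinearMap.id := by
  have hnd := gW_nondegenerate hg
  refine LinearMap.ext fun u => ?_
  simp only [hatEnd, dif_pos hnd, LinearMap.comp_apply, LinearEquiv.coe_coe, LinearMap.id_apply,
    LinearEquiv.symm_apply_eq]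
  rfl

lemma trg_gW {g : LinearMap.BilinForm ℝ V} (hg : g.Nondegenerate) :
    trg g (gW g) = finrank ℝ V := by
  rw [trg, hatEnd_gW hg, LinearMap.trace_id, Module.finrank_baseChange]

lemma trg_smul (g : LinearMap.BilinForm ℝ V) (c : ℂ) (S : LinearMap.BilinForm ℂ (Cx V)) :
    trg g (c • S) = c * trg g S := by
  have h : hatEnd g (c • S) = c • hatEnd g S := by
    unfold hatEnd
    split
    · ext u; simp
    · simp
  rw [trg, trg, h, map_smul, smul_eq_mul]

lemma eq_zero_of_eq_half_smul_gW {g : LinearMap.BilinForm ℝ V} (hg : g.Nondegenerate)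
    (hdim : finrank ℝ V ≠ 2) {S : LinearMap.BilinForm ℂ (Cx V)}
    (h : ∀ u v : Cx V, S u v = (1 / 2 : ℂ) * gW g u v * trg g S) : S = 0 := by
  have hS : S = ((1 / 2 : ℂ) * trg g S) • gW g := by
    refine LinearMap.ext₂ fun u v => ?_
    rw [LinearMap.smul_apply, LinearMap.smul_apply, smul_eq_mul, h u v]
    ring
  have htr : (finrank ℝ V - 2 : ℂ) * trg g S = 0 := by
    have := congrArg (trg g) hS
    rw [trg_smul, trg_gW hg] at this
    linear_combination -2 * this
  have hdim' : (finrank ℝ V - 2 : ℂ) ≠ 0 := by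
    rw [sub_ne_zero]
    exact_mod_cast hdim
  rw [hS, (mul_eq_zero.mp htr).resolve_left hdim', mul_zero, zero_smul]

lemma Dval_of_lorenz {g : LinearMap.BilinForm ℝ V} {k : V} {S : LinearMap.BilinForm ℂ (Cx V)}
    (hLorenz : ∀ v : Cx V, S (ι k) v = (1 / 2 : ℂ) * gW g (ι k) v * trg g S) (u v : Cx V) :
    Dval g k S u v =
      (1 / 2 : ℂ) * gW g (ι k) (ι k) * (S u v - (1 / 2 : ℂ) * gW g u v * trg g S) := by
  rw [Dval, hLorenz u, hLorenz v, hLorenz (ι k)]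
  ring

theorem statement_5_general (g : LinearMap.BilinForm ℝ V) (hdim : finrank ℝ V = 4)
    (hg : g.Nondegenerate)
    (k : V) (S : LinearMap.BilinForm ℂ (Cx V)) (hS0 : S ≠ 0)
    (hLorenz : ∀ v : Cx V, S (ι k) v = (1 / 2 : ℂ) * gW g (ι k) v * trg g S)
    (hker : ∀ u v : Cx V, Dval g k S u v = 0) :
    g k k = 0 ∧
      ∀ S' : LinearMap.BilinForm ℂ (Cx V),
        (∀ u v : Cx V, S' u v = (1 / 2 : ℂ) * gW g u v * trg g S') → S' = 0 := by
  have hdim2 : finrank ℝ V ≠ 2 := by omega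
  refine ⟨?_, fun S' h => eq_zero_of_eq_half_smul_gW hg hdim2 h⟩
  by_contra hk
  have hkk : (1 / 2 : ℂ) * gW g (ι k) (ι k) ≠ 0 := by
    rw [gW_ι_ι]
    exact mul_ne_zero (by norm_num) (by exact_mod_cast hk)
  refine hS0 (eq_zero_of_eq_half_smul_gW hg hdim2 fun u v => ?_)
  have := hker u v
  rw [Dval_of_lorenz hLorenz, mul_eq_zero, or_iff_right hkk, sub_eq_zero] at this
  exact this

/-- A nonzero symmetric form in the Lorenz gauge that lies in the kernel of `D[k]`
forces `k` to be null; moreover, in dimension 4 the equation `S = (1/2) g tr_g S`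
forces `S = 0`. -/
theorem statement_5 (g : LinearMap.BilinForm ℝ V) (hdim : finrank ℝ V = 4)
    (hg : g.Nondegenerate) (hsymm : g.IsSymm)
    (k : V) (S : LinearMap.BilinForm ℂ (Cx V)) (hS : S.IsSymm) (hS0 : S ≠ 0)
    (hLorenz : ∀ v : Cx V, S (ι k) v = (1 / 2 : ℂ) * gW g (ι k) v * trg g S)
    (hker : ∀ u v : Cx V, Dval g k S u v = 0) :
    g k k = 0 ∧
      ∀ S' : LinearMap.BilinForm ℂ (Cx V),
        (∀ u v : Cx V, S' u v = (1 / 2 : ℂ) * gW g u v * trg g S') → S' = 0 :=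
  statement_5_general g hdim hg k S hS0 hLorenz hker

end
end

section
/- Let k ∈ V be a nonzero null vector (g(k,k) = 0) and let S be a complex symmetric bilinear form on W with D[k](S) = 0. Then the trace-reversed form Š := S − (1/2)(tr_g S)·g is transverse to k: Š(k, v) = 0 for all v ∈ W. -/
open scoped TensorProduct
open Module

noncomputable section

variable {V : Type} [AddCommGroup V] [Module ℝ V]

variable [FiniteDimensional ℝ V]

/-! For null `k`,
`2 D[k](S)(u,v) = g(k,u) g(k,v) tr S + g(u,v) S(k,k) − g(k,u) S(k,v) − g(k,v) S(k,u)`.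
Evaluating at `(w,w)` with `w ⊥ k` non-null forces `S(k,k) = 0`; evaluating at `(u₀,u₀)` and
`(u₀,v)` with `g(k,u₀) = 1` then gives `S(k,u₀) = tr S / 2` and `S(k,v) = (tr S / 2) g(k,v)`.
Such a `w` exists: if `g` vanished on `k^⊥`, then `m ↦ g(m,u₀)` would embed `k^⊥`, of dimension
`3`, into `ℝ`. -/

namespace LinearMap.BilinForm

variable {K E : Type*} [Field K] [AddCommGroup E] [Module K E]

theorem exists_apply_eq_one_of_separatingLeft {B : LinearMap.BilinForm K E}
    (hB : B.SeparatingLeft) {k : E} (hk : k ≠ 0) : ∃ u, B k u = 1 := by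
  obtain ⟨u, hu⟩ : ∃ u, B k u ≠ 0 := by
    by_contra! h
    exact hk (hB k h)
  exact ⟨(B k u)⁻¹ • u, by rw [map_smul, smul_eq_mul, inv_mul_cancel₀ hu]⟩

theorem eq_zero_of_forall_ker_of_apply_eq_zero {B : LinearMap.BilinForm K E}
    (hB : B.SeparatingLeft) {k u m : E} (hku : B k u = 1) (hm : ∀ w, B k w = 0 → B m w = 0)
    (hmu : B m u = 0) : m = 0 := by
  refine hB m fun x => ?_
  have hx : B k (x - B k x • u) = 0 := by simp [hku]
  have hsplit : x = (x - B k x • u) + B k x • u := by abel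
  rw [hsplit, map_add, map_smul, hm _ hx, hmu, smul_zero, add_zero]

theorem exists_apply_eq_zero_and_apply_self_ne_zero [FiniteDimensional K E]
    [Invertible (2 : K)] {B : LinearMap.BilinForm K E} (hB : B.SeparatingLeft) (hsymm : B.IsSymm)
    (hdim : 3 ≤ finrank K E) {k : E} (hk : k ≠ 0) : ∃ w, B k w = 0 ∧ B w w ≠ 0 := by
  obtain ⟨u, hku⟩ := exists_apply_eq_one_of_separatingLeft hB hk
  set H := LinearMap.ker (B k)
  have hH : finrank K H + 1 = finrank K E :=
    Module.Dual.finrank_ker_add_one_of_ne_zero fun h => by simp [h] at hku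
  suffices hne : B.restrict H ≠ 0 by
    obtain ⟨⟨w, hw⟩, hww⟩ :=
      exists_bilinForm_self_ne_zero hne (isSymm_iff.mp (hsymm.restrict H))
    exact ⟨w, hw, hww⟩
  intro hzero
  have hinj : Function.Injective ((B.flip u).domRestrict H) := by
    rw [← LinearMap.ker_eq_bot, LinearMap.ker_eq_bot']
    intro m hmu
    refine Subtype.ext (eq_zero_of_forall_ker_of_apply_eq_zero hB hku (fun w hw => ?_) hmu)
    simpa using congrArg (fun C : LinearMap.BilinForm K H => C m ⟨w, hw⟩) hzero
  have := LinearMap.finrank_le_finrank_of_injective hinj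
  rw [finrank_self] at this
  omega

end LinearMap.BilinForm

theorem gW_ι_ι_s9 {E : Type} [AddCommGroup E] [Module ℝ E] (g : LinearMap.BilinForm ℝ E)
    (a b : E) : gW g (ι a) (ι b) = (g a b : ℂ) := by
  simp [gW, ι, Complex.real_smul]

section NullSymbol

variable {g : LinearMap.BilinForm ℝ V} {k : V} {S : LinearMap.BilinForm ℂ (Cx V)}

theorem two_mul_Dval_of_null (hk : gW g (ι k) (ι k) = 0) (u v : Cx V) :
    2 * Dval g k S u v = gW g (ι k) u * gW g (ι k) v * trg g S + gW g u v * S (ι k) (ι k)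
      - gW g (ι k) u * S (ι k) v - gW g (ι k) v * S (ι k) u := by
  rw [Dval, hk]
  ring

theorem apply_null_self_eq_zero_of_Dval_eq_zero (hk : gW g (ι k) (ι k) = 0)
    (hker : ∀ u v, Dval g k S u v = 0) {w : Cx V} (hkw : gW g (ι k) w = 0)
    (hww : gW g w w ≠ 0) : S (ι k) (ι k) = 0 := by
  have h := two_mul_Dval_of_null (S := S) hk w w
  rw [hker, hkw] at h
  exact (mul_eq_zero.mp (by linear_combination -h)).resolve_left hww

theorem apply_null_sub_half_trg_eq_zero (hk : gW g (ι k) (ι k) = 0)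
    (hker : ∀ u v, Dval g k S u v = 0) (hSkk : S (ι k) (ι k) = 0) {u₀ : Cx V}
    (hku₀ : gW g (ι k) u₀ = 1) (v : Cx V) :
    S (ι k) v - (1 / 2 : ℂ) * trg g S * gW g (ι k) v = 0 := by
  have hu₀u₀ := two_mul_Dval_of_null (S := S) hk u₀ u₀
  have hu₀v := two_mul_Dval_of_null (S := S) hk u₀ v
  rw [hker, hku₀, hSkk] at hu₀u₀ hu₀v
  linear_combination hu₀v - gW g (ι k) v * hu₀u₀ / 2

end NullSymbol

theorem statement_9_general (g : LinearMap.BilinForm ℝ V) (hdim : finrank ℝ V = 4)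
    (hg : g.Nondegenerate) (hsymm : g.IsSymm)
    (k : V) (hk : k ≠ 0) (hknull : g k k = 0)
    (S : LinearMap.BilinForm ℂ (Cx V))
    (hker : ∀ u v : Cx V, Dval g k S u v = 0) :
    ∀ v : Cx V, S (ι k) v - (1 / 2 : ℂ) * trg g S * gW g (ι k) v = 0 := by
  have hnull : gW g (ι k) (ι k) = 0 := by rw [gW_ι_ι_s9, hknull, Complex.ofReal_zero]
  obtain ⟨u₀, hku₀⟩ := g.exists_apply_eq_one_of_separatingLeft hg.1 hk
  obtain ⟨w, hkw, hww⟩ :=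
    g.exists_apply_eq_zero_and_apply_self_ne_zero hg.1 hsymm (by omega) hk
  have hSkk := apply_null_self_eq_zero_of_Dval_eq_zero hnull hker
    (by rw [gW_ι_ι_s9, hkw, Complex.ofReal_zero]) (by rwa [gW_ι_ι_s9, Complex.ofReal_ne_zero])
  exact apply_null_sub_half_trg_eq_zero hnull hker hSkk
    (by rw [gW_ι_ι_s9, hku₀, Complex.ofReal_one])

/-- If `k` is nonzero null and `D[k](S) = 0`, then the trace-reversed form
`Š = S − (1/2)(tr_g S) g` is transverse to `k`: `Š(k,v) = 0` for all `v`. -/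
theorem statement_9 (g : LinearMap.BilinForm ℝ V) (hdim : finrank ℝ V = 4)
    (hg : g.Nondegenerate) (hsymm : g.IsSymm)
    (k : V) (hk : k ≠ 0) (hknull : g k k = 0)
    (S : LinearMap.BilinForm ℂ (Cx V)) (hS : S.IsSymm)
    (hker : ∀ u v : Cx V, Dval g k S u v = 0) :
    ∀ v : Cx V, S (ι k) v - (1 / 2 : ℂ) * trg g S * gW g (ι k) v = 0 :=
  statement_9_general g hdim hg hsymm k hk hknull S hker
end
end
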